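/- arXiv:2302.13937 — 2 statements merged into one kernel-verified Lean document; each statement's English description precedes it below -/
import Mathlib

section
/- Under the stated dynamic-consistency and constant-sum relations with both players making l moves, the game intelligences satisfy GI₁ = GI₂ + R₁ − R₂ − v₀ + v_T. -/
open Finset

theorem sum_Icc_add_eq_add_sum_Icc_shift_add {M : Type*} [AddCommMonoid M] (f g : ℕ → M)
    (n : ℕ) :
    ∑ k ∈ Icc 1 (n + 1), (f k + g k) = f 1 + ∑ k ∈ Icc 1 n, (g k + f (k + 1)) + g (n + 1) := by
  induction n with
  | zero => simp
  | succ n ih =>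
    rw [sum_Icc_succ_top (by omega), ih, sum_Icc_succ_top (by omega)]
    abel

theorem sum_Icc_eq_card_mul_of_forall {f : ℕ → ℝ} {c : ℝ} {n : ℕ}
    (h : ∀ k, 1 ≤ k → k ≤ n → f k = c) : ∑ k ∈ Icc 1 n, f k = n * c := by
  rw [sum_congr rfl fun k hk => h k (mem_Icc.1 hk).1 (mem_Icc.1 hk).2, sum_const,
    Nat.card_Icc, nsmul_eq_mul, Nat.add_sub_cancel]

/-- Regrouped as `∑ (B1 k + A2 k) - ∑ (A1 k + B2 k)`, every pair `A1 k + B2 k` and, after a shift,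
every pair `A2 k + B1 (k + 1)` is worth `c`; only the endpoints `B1 1` and `A2 l` survive. -/
theorem sum_Icc_sub_sub_sum_Icc_sub_of_interleaved {l : ℕ} (hl : 1 ≤ l) {c : ℝ}
    {B1 A1 B2 A2 : ℕ → ℝ}
    (h1 : ∀ k, 1 ≤ k → k ≤ l → A1 k + B2 k = c)
    (h2 : ∀ k, 1 ≤ k → k ≤ l - 1 → A2 k + B1 (k + 1) = c) :
    ∑ k ∈ Icc 1 l, (B1 k - A1 k) - ∑ k ∈ Icc 1 l, (B2 k - A2 k) = B1 1 + A2 l - c := by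
  obtain ⟨m, rfl⟩ : ∃ m, l = m + 1 := ⟨l - 1, by omega⟩
  have hregroup : ∑ k ∈ Icc 1 (m + 1), (B1 k - A1 k) - ∑ k ∈ Icc 1 (m + 1), (B2 k - A2 k) =
      ∑ k ∈ Icc 1 (m + 1), (B1 k + A2 k) - ∑ k ∈ Icc 1 (m + 1), (A1 k + B2 k) := by
    rw [← sum_sub_distrib, ← sum_sub_distrib]
    exact sum_congr rfl fun k _ => by ring
  have hsum_A1_B2 : ∑ k ∈ Icc 1 (m + 1), (A1 k + B2 k) = (m + 1 : ℕ) * c :=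
    sum_Icc_eq_card_mul_of_forall h1
  have hsum_B1_A2 : ∑ k ∈ Icc 1 (m + 1), (B1 k + A2 k) = B1 1 + m * c + A2 (m + 1) := by
    rw [sum_Icc_add_eq_add_sum_Icc_shift_add, sum_Icc_eq_card_mul_of_forall (n := m) h2]
  rw [hregroup, hsum_A1_B2, hsum_B1_A2]
  push_cast
  ring

theorem gi_dynamic_consistency_equal_moves_general
    (l : ℕ) (hl : 1 ≤ l) (c R1 R2 v0 vT : ℝ)
    (B1 A1 B2 A2 : ℕ → ℝ)
    (h1 : ∀ k, 1 ≤ k → k ≤ l → A1 k + B2 k = c)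
    (h2 : ∀ k, 1 ≤ k → k ≤ l - 1 → A2 k + B1 (k + 1) = c)
    (hv0 : v0 = B1 1)
    (hvT : A2 l = c - vT) :
    R1 - (∑ k ∈ Finset.Icc 1 l, (B1 k - A1 k)) =
      (R2 - (∑ k ∈ Finset.Icc 1 l, (B2 k - A2 k))) + R1 - R2 - v0 + vT := by
  have := sum_Icc_sub_sub_sum_Icc_sub_of_interleaved hl h1 h2
  linarith

/-- Sequential two-person constant-sum game, both players making `l` moves.
`B i k` is machine `M_i`'s evaluation of the machine-optimal action at player
`i`'s `k`-th decision node, `A i k` its evaluation of the actual `k`-th action.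
Under the dynamic-consistency/constant-sum relations
`A₁(k) + B₂(k) = c` (k = 1,…,l), `A₂(k) + B₁(k+1) = c` (k = 1,…,l−1),
`v₀ = B₁(1)` and `A₂(l) = c − v_T`, the game intelligences
`GI_i = R_i − ∑_{k=1}^l (B_i(k) − A_i(k))` satisfy
`GI₁ = GI₂ + R₁ − R₂ − v₀ + v_T`. -/
theorem gi_dynamic_consistency_equal_moves
    (l : ℕ) (hl : 1 ≤ l) (c R1 R2 v0 vT : ℝ)
    (B1 A1 B2 A2 : ℕ → ℝ)
    (hconst : R1 + R2 = c)
    (h1 : ∀ k, 1 ≤ k → k ≤ l → A1 k + B2 k = c)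
    (h2 : ∀ k, 1 ≤ k → k ≤ l - 1 → A2 k + B1 (k + 1) = c)
    (hv0 : v0 = B1 1)
    (hvT : A2 l = c - vT) :
    R1 - (∑ k ∈ Finset.Icc 1 l, (B1 k - A1 k)) =
      (R2 - (∑ k ∈ Finset.Icc 1 l, (B2 k - A2 k))) + R1 - R2 - v0 + vT :=
  gi_dynamic_consistency_equal_moves_general l hl c R1 R2 v0 vT B1 A1 B2 A2 h1 h2 hv0 hvT
end

section
/- Under the stated dynamic-consistency and constant-sum relations with player 1 making l+1 moves and player 2 making l moves, the game intelligences satisfy GI₁ = GI₂ + R₁ − R₂ − v₀ + v_T, equivalently GI₁ = GI₂ + 2R₁ − c − v₀ + v_T. -/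
/-! Dynamic consistency and the constant-sum property give `B₁(k+1) − A₁(k) = B₂(k) − A₂(k)`,
since both sides equal `c − A₂(k) − (c − B₂(k))`. Regrouping player 1's point losses as
`B₁(1) − A₁(l+1) + ∑ₖ (B₁(k+1) − A₁(k))` therefore gives `GPL₁ = GPL₂ + v₀ − v_T`, and the
two identities follow from `R₁ + R₂ = c`. -/

open Finset

theorem sum_Icc_sub_eq_add_sum_Icc_shift {M : Type*} [AddCommGroup M] (f g : ℕ → M) (l : ℕ) :
    ∑ k ∈ Icc 1 (l + 1), (f k - g k) = f 1 - g (l + 1) + ∑ k ∈ Icc 1 l, (f (k + 1) - g k) := by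
  induction l with
  | zero => simp
  | succ n ih =>
    rw [sum_Icc_succ_top (by omega), ih, sum_Icc_succ_top (by omega)]
    abel

theorem gamePointLoss_eq_of_dynamic_consistency (l : ℕ) (c : ℝ) (B1 A1 B2 A2 : ℕ → ℝ)
    (h1 : ∀ k, 1 ≤ k → k ≤ l → A1 k + B2 k = c)
    (h2 : ∀ k, 1 ≤ k → k ≤ l → A2 k + B1 (k + 1) = c) :
    ∑ k ∈ Icc 1 (l + 1), (B1 k - A1 k) =
      ∑ k ∈ Icc 1 l, (B2 k - A2 k) + B1 1 - A1 (l + 1) := by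
  have hshift : ∑ k ∈ Icc 1 l, (B1 (k + 1) - A1 k) = ∑ k ∈ Icc 1 l, (B2 k - A2 k) := by
    refine sum_congr rfl fun k hk => ?_
    obtain ⟨hk1, hkl⟩ := mem_Icc.mp hk
    linarith [h1 k hk1 hkl, h2 k hk1 hkl]
  rw [sum_Icc_sub_eq_add_sum_Icc_shift, hshift]
  ring

theorem gi_dynamic_consistency_unequal_moves_general
    (l : ℕ) (c R1 R2 v0 vT : ℝ)
    (B1 A1 B2 A2 : ℕ → ℝ)
    (hconst : R1 + R2 = c)
    (h1 : ∀ k, 1 ≤ k → k ≤ l → A1 k + B2 k = c)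
    (h2 : ∀ k, 1 ≤ k → k ≤ l → A2 k + B1 (k + 1) = c)
    (hv0 : v0 = B1 1)
    (hvT : vT = A1 (l + 1)) :
    R1 - (∑ k ∈ Finset.Icc 1 (l + 1), (B1 k - A1 k)) =
      (R2 - (∑ k ∈ Finset.Icc 1 l, (B2 k - A2 k))) + R1 - R2 - v0 + vT ∧
    R1 - (∑ k ∈ Finset.Icc 1 (l + 1), (B1 k - A1 k)) =
      (R2 - (∑ k ∈ Finset.Icc 1 l, (B2 k - A2 k))) + 2 * R1 - c - v0 + vT := by
  have hGPL := gamePointLoss_eq_of_dynamic_consistency l c B1 A1 B2 A2 h1 h2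
  subst hv0 hvT
  constructor <;> linarith

/-- Sequential two-person constant-sum game, player 1 making `l+1` moves and
player 2 making `l` moves, with player 1's last move leading to the terminal node.
Under the dynamic-consistency/constant-sum relations
`A₁(k) + B₂(k) = c` (k = 1,…,l), `A₂(k) + B₁(k+1) = c` (k = 1,…,l),
`v₀ = B₁(1)` and `v_T = A₁(l+1)`, the game intelligences
`GI₁ = R₁ − ∑_{k=1}^{l+1} (B₁(k) − A₁(k))` and
`GI₂ = R₂ − ∑_{k=1}^{l} (B₂(k) − A₂(k))` satisfy
`GI₁ = GI₂ + R₁ − R₂ − v₀ + v_T`, equivalently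
`GI₁ = GI₂ + 2R₁ − c − v₀ + v_T`. -/
theorem gi_dynamic_consistency_unequal_moves
    (l : ℕ) (hl : 1 ≤ l) (c R1 R2 v0 vT : ℝ)
    (B1 A1 B2 A2 : ℕ → ℝ)
    (hconst : R1 + R2 = c)
    (h1 : ∀ k, 1 ≤ k → k ≤ l → A1 k + B2 k = c)
    (h2 : ∀ k, 1 ≤ k → k ≤ l → A2 k + B1 (k + 1) = c)
    (hv0 : v0 = B1 1)
    (hvT : vT = A1 (l + 1)) :
    R1 - (∑ k ∈ Finset.Icc 1 (l + 1), (B1 k - A1 k)) =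
      (R2 - (∑ k ∈ Finset.Icc 1 l, (B2 k - A2 k))) + R1 - R2 - v0 + vT ∧
    R1 - (∑ k ∈ Finset.Icc 1 (l + 1), (B1 k - A1 k)) =
      (R2 - (∑ k ∈ Finset.Icc 1 l, (B2 k - A2 k))) + 2 * R1 - c - v0 + vT :=
  gi_dynamic_consistency_unequal_moves_general l c R1 R2 v0 vT B1 A1 B2 A2 hconst h1 h2 hv0 hvT
end
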